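/- Let η be a convex quadratic function on [ω̲, ω̄] and λ* = max{η'(ω̄), −η'(ω̲)}. Then λ* is the smallest λ ≥ 0 such that both inequalities η(ω̲) + λ(ω̲ − ω) ≤ η(ω) and η(ω̄) − λ(ω̄ − ω) ≤ η(ω) hold for all ω ∈ [ω̲, ω̄]. -/
import Mathlib


/-- λ* = max{η'(ω̄), −η'(ω̲)} is the smallest λ ≥ 0 such that the two affine
endpoint minorants lie below the convex quadratic η on [ω̲, ω̄]. -/
theorem stmt2 (c2 c1 c0 a b : ℝ) (hc2 : 0 ≤ c2) (hab : a < b) :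
    IsLeast {lam : ℝ | 0 ≤ lam ∧ ∀ w ∈ Set.Icc a b,
        (c2 * a ^ 2 - c1 * a + c0) + lam * (a - w) ≤ c2 * w ^ 2 - c1 * w + c0 ∧
        (c2 * b ^ 2 - c1 * b + c0) - lam * (b - w) ≤ c2 * w ^ 2 - c1 * w + c0}
      (max (2 * c2 * b - c1) (-(2 * c2 * a - c1))) := by
  set L := max (2 * c2 * b - c1) (-(2 * c2 * a - c1)) with hL
  have h1 : 2 * c2 * b - c1 ≤ L := le_max_left _ _
  have h2 : -(2 * c2 * a - c1) ≤ L := le_max_right _ _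
  constructor
  · refine ⟨?_, ?_⟩
    · nlinarith [mul_nonneg hc2 (sub_pos.mpr hab).le]
    · rintro w ⟨hw1, hw2⟩
      constructor
      · nlinarith [mul_nonneg (sub_nonneg.mpr hw1) (by linarith : 0 ≤ L - (c1 - 2*c2*a)),
          mul_nonneg hc2 (mul_self_nonneg (w - a))]
      · nlinarith [mul_nonneg (sub_nonneg.mpr hw2) (by linarith : 0 ≤ L - (2*c2*b - c1)),
          mul_nonneg hc2 (mul_self_nonneg (b - w))]
  · rintro lam ⟨hlam0, hlam⟩
    have key1 : 2 * c2 * b - c1 ≤ lam := by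
      refine le_of_forall_pos_le_add fun ε hε => ?_
      rcases eq_or_lt_of_le hc2 with hc | hc
      · have := (hlam a ⟨le_refl a, hab.le⟩).2
        subst hc
        nlinarith [sub_pos.mpr hab, this]
      · set w := b - min (b - a) (ε / c2) with hw
        have hm : 0 < min (b - a) (ε / c2) := lt_min (by linarith) (div_pos hε hc)
        have hwa : a ≤ w := by
          have := min_le_left (b - a) (ε / c2); rw [hw]; linarith
        have hwb : w < b := by rw [hw]; linarith
        have := (hlam w ⟨hwa, hwb.le⟩).2
        -- (w-b)(c2(w+b)-c1-lam) ≥ 0, w < b ⇒ c2(w+b)-c1 ≤ lam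
        have hfac : c2 * (w + b) - c1 - lam ≤ 0 := by
          nlinarith [sub_pos.mpr hwb]
        have hcw : c2 * (b - w) ≤ ε := by
          have : b - w = min (b - a) (ε / c2) := by rw [hw]; ring
          rw [this]
          calc c2 * min (b - a) (ε / c2) ≤ c2 * (ε / c2) :=
                mul_le_mul_of_nonneg_left (min_le_right _ _) hc2
            _ = ε := by field_simp
        linarith [hfac, hcw]
    have key2 : -(2 * c2 * a - c1) ≤ lam := by
      refine le_of_forall_pos_le_add fun ε hε => ?_
      rcases eq_or_lt_of_le hc2 with hc | hc
      · have := (hlam b ⟨hab.le, le_refl b⟩).1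
        subst hc
        nlinarith [sub_pos.mpr hab, this]
      · set w := a + min (b - a) (ε / c2) with hw
        have hm : 0 < min (b - a) (ε / c2) := lt_min (by linarith) (div_pos hε hc)
        have hwa : a < w := by rw [hw]; linarith
        have hwb : w ≤ b := by
          have := min_le_left (b - a) (ε / c2); rw [hw]; linarith
        have := (hlam w ⟨hwa.le, hwb⟩).1
        have hfac : 0 ≤ c2 * (w + a) - c1 + lam := by
          nlinarith [sub_pos.mpr hwa]
        have hcw : c2 * (w - a) ≤ ε := by
          have : w - a = min (b - a) (ε / c2) := by rw [hw]; ring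
          rw [this]
          calc c2 * min (b - a) (ε / c2) ≤ c2 * (ε / c2) :=
                mul_le_mul_of_nonneg_left (min_le_right _ _) hc2
            _ = ε := by field_simp
        linarith [hfac, hcw]
    exact max_le key1 key2
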